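/- (Convergence of the projection-free subgradient algorithm.) Let X ⊆ ℝⁿ be a closed convex set contained in the Euclidean ball of radius R centered at x₁ ∈ X, and let f : ℝⁿ → ℝ be convex and G-Lipschitz. Define the iterates: y₁ = x₁, Q₀ = 0, and for 1 ≤ k ≤ T-1: Q_k = Q_{k-1} + y_k - x_k, g_k ∈ ∂f(y_k), x_{k+1} ∈ argmin_{x ∈ X} ⟨-Q_k, x⟩, y_{k+1} = (1/(α+η))(α y_k + η x_{k+1} - η Q_k - g_k). With α = G√T/R and η = 2G/(R√T), the averaged iterate x̄ = (1/T) Σ_{k=1}^T x_k satisfies f(x̄) - min_{x ∈ X} f(x) ≤ 3RG/√T for every integer T ≥ 1. -/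

import Mathlib

open RealInnerProductSpace

set_option maxHeartbeats 2000000 in
/-- Convergence of the projection-free subgradient algorithm: with `α = G√T/R` and
`η = 2G/(R√T)`, the averaged iterate `x̄ = (1/T) Σ_{k=1}^T x_k` satisfies
`f(x̄) - f(x*) ≤ 3RG/√T`. -/
theorem stmt_16 (n : ℕ) (X : Set (EuclideanSpace ℝ (Fin n)))
    (hXcl : IsClosed X) (hXconv : Convex ℝ X)
    (f : EuclideanSpace ℝ (Fin n) → ℝ) (hconv : ConvexOn ℝ Set.univ f)
    (G R : ℝ) (hG : 0 < G) (hR : 0 < R)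
    (hlip : ∀ a b, |f a - f b| ≤ G * ‖a - b‖)
    (T : ℕ) (hT : 1 ≤ T)
    (α η : ℝ)
    (hα : α = G * Real.sqrt T / R)
    (hη : η = 2 * G / (R * Real.sqrt T))
    (x y Q g : ℕ → EuclideanSpace ℝ (Fin n))
    (hx1 : x 1 ∈ X)
    (hball : ∀ z ∈ X, ‖z - x 1‖ ≤ R)
    (hy1 : y 1 = x 1)
    (hQ0 : Q 0 = 0)
    (hQ : ∀ k, 1 ≤ k → k ≤ T → Q k = Q (k - 1) + y k - x k)
    (hg : ∀ k, 1 ≤ k → k ≤ T → ∀ z, f z ≥ f (y k) + ⟪g k, z - y k⟫)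
    (hxmem : ∀ k, 1 ≤ k → k ≤ T - 1 → x (k + 1) ∈ X)
    (hxmin : ∀ k, 1 ≤ k → k ≤ T - 1 → ∀ z ∈ X, ⟪-Q k, x (k + 1)⟫ ≤ ⟪-Q k, z⟫)
    (hy : ∀ k, 1 ≤ k → k ≤ T - 1 →
      y (k + 1) = (1 / (α + η)) • (α • y k + η • x (k + 1) - η • Q k - g k))
    (xstar : EuclideanSpace ℝ (Fin n)) (hxstar : xstar ∈ X)
    (hxstarmin : ∀ z ∈ X, f xstar ≤ f z) :
    f ((1 / (T : ℝ)) • ∑ k ∈ Finset.Icc 1 T, x k) - f xstar ≤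
      3 * R * G / Real.sqrt T := by
  -- trivial case T = 1
  rcases eq_or_lt_of_le hT with hT1 | hT2
  · subst hT1
    simp only [Finset.Icc_self, Finset.sum_singleton, Nat.cast_one, Real.sqrt_one]
    have h1 : (1 / (1:ℝ)) • x 1 = x 1 := by norm_num
    rw [h1]
    have h2 := hlip (x 1) xstar
    have h3 : ‖x 1 - xstar‖ ≤ R := by
      have := hball xstar hxstar
      rwa [norm_sub_rev] at this
    have h4 : f (x 1) - f xstar ≤ G * ‖x 1 - xstar‖ := (abs_le.mp h2).2
    have h5 : G * ‖x 1 - xstar‖ ≤ G * R := by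
      exact mul_le_mul_of_nonneg_left h3 hG.le
    nlinarith [norm_nonneg (x 1 - xstar)]
  -- main case T ≥ 2
  have hT2' : 2 ≤ T := hT2
  have hT0 : (0:ℝ) < (T:ℝ) := by exact_mod_cast Nat.lt_of_lt_of_le Nat.zero_lt_one hT
  have hsq0 : (0:ℝ) < Real.sqrt T := Real.sqrt_pos.mpr hT0
  have hα0 : 0 < α := by rw [hα]; positivity
  have hη0 : 0 < η := by rw [hη]; positivity
  have hαη : (0:ℝ) < α + η := by linarith
  -- ‖g k‖ ≤ G
  have hgle : ∀ k, 1 ≤ k → k ≤ T → ‖g k‖ ≤ G := by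
    intro k h1 h2
    have h := hg k h1 h2 (y k + g k)
    have hsimp : (y k + g k) - y k = g k := by abel
    rw [hsimp, real_inner_self_eq_norm_sq] at h
    have hl := (abs_le.mp (hlip (y k + g k) (y k))).2
    rw [hsimp] at hl
    rcases eq_or_lt_of_le (norm_nonneg (g k)) with h0 | h0
    · rw [← h0]; exact hG.le
    · nlinarith
  -- Q as partial sums
  have hQm : ∀ m, m ≤ T → Q m = ∑ k ∈ Finset.Icc 1 m, (y k - x k) := by
    intro m
    induction m with
    | zero => intro _; simp [hQ0]
    | succ p ih =>
      intro hpT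
      rw [Finset.sum_Icc_succ_top (Nat.one_le_iff_ne_zero.mpr (Nat.succ_ne_zero p)),
        ← ih (Nat.le_of_succ_le hpT)]
      have h := hQ (p + 1) (Nat.succ_le_succ (Nat.zero_le p)) hpT
      simp only [Nat.add_sub_cancel] at h
      rw [h]; abel
  have hQ1 : Q 1 = 0 := by
    have := hQm 1 hT
    simp only [Finset.Icc_self, Finset.sum_singleton, hy1] at this
    rw [this]; abel
  have hQrec : ∀ k, 1 ≤ k → k + 1 ≤ T → Q (k + 1) = Q k + (y (k+1) - x (k+1)) := by
    intro k h1 h2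
    have h := hQ (k + 1) (by omega) h2
    simp only [Nat.add_sub_cancel] at h
    rw [h]; abel
  -- update law: g k = -(α • (y (k+1) - y k)) - η • Q (k+1)
  have hupd : ∀ k, 1 ≤ k → k + 1 ≤ T →
      g k = -(α • (y (k+1) - y k)) - η • Q (k+1) := by
    intro k h1 h2
    have hk' : k ≤ T - 1 := by omega
    have hyk := hy k h1 hk'
    have hQk1 := hQrec k h1 h2
    have hexp : (α + η) • y (k+1) = α • y k + η • x (k+1) - η • Q k - g k := by
      rw [hyk, smul_smul, mul_one_div, div_self (ne_of_gt hαη), one_smul]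
    have hgk : g k = α • y k + η • x (k+1) - η • Q k - (α + η) • y (k+1) := by
      rw [hexp]; abel
    rw [hgk, hQk1]
    module
  -- general Young inequality
  have young : ∀ β c t : ℝ, 0 < β → c*t - β/2*t^2 ≤ c^2/(2*β) := by
    intro β c t hβ
    rw [← sub_nonneg]
    have hkey : c^2/(2*β) - (c*t - β/2*t^2) = (β*t - c)^2/(2*β) := by
      field_simp; ring
    rw [hkey]
    positivity
  -- per-step master inequality
  have hstep : ∀ k, 1 ≤ k → k + 1 ≤ T →
      -⟪g k, xstar - y k⟫ ≤ α/2 * (‖xstar - y k‖^2 - ‖xstar - y (k+1)‖^2)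
        + η * ⟪Q (k+1), xstar - y (k+1)⟫ + G^2/(2*α) := by
    intro k h1 h2
    have hg2 := hupd k h1 h2
    have hid : -⟪g k, xstar - y k⟫ = α/2 * (‖xstar - y k‖^2 - ‖xstar - y (k+1)‖^2)
        + η * ⟪Q (k+1), xstar - y (k+1)⟫ - ⟪g k, y (k+1) - y k⟫
        - α/2 * ‖y (k+1) - y k‖^2 := by
      have hwk : xstar - y k = (xstar - y (k+1)) + (y (k+1) - y k) := by abel
      rw [hg2, hwk]
      simp only [inner_sub_left, inner_sub_right, inner_add_left, inner_add_right,
        inner_neg_left, inner_neg_right, real_inner_smul_left, real_inner_smul_right, norm_add_sq_real,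
        real_inner_self_eq_norm_sq, real_inner_comm]
      ring
    have hcs : -⟪g k, y (k+1) - y k⟫ ≤ G * ‖y (k+1) - y k‖ := by
      have ha := abs_real_inner_le_norm (g k) (y (k+1) - y k)
      have hb : ‖g k‖ * ‖y (k+1) - y k‖ ≤ G * ‖y (k+1) - y k‖ :=
        mul_le_mul_of_nonneg_right (hgle k h1 (by omega)) (norm_nonneg _)
      calc -⟪g k, y (k+1) - y k⟫ ≤ |⟪g k, y (k+1) - y k⟫| := neg_le_abs _
        _ ≤ ‖g k‖ * ‖y (k+1) - y k‖ := ha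
        _ ≤ G * ‖y (k+1) - y k‖ := hb
    have hyg := young α G (‖y (k+1) - y k‖) hα0
    linarith
  -- C1 induction
  have hC1 : ∀ m, 1 ≤ m → m ≤ T →
      ∑ k ∈ Finset.Icc 1 m, (-⟪g k, xstar - y k⟫) ≤
        α/2 * (‖xstar - y 1‖^2 - ‖xstar - y m‖^2)
        + η * ∑ k ∈ Finset.Icc 2 m, ⟪Q k, xstar - y k⟫
        + ((m:ℝ) - 1) * (G^2/(2*α)) + (-⟪g m, xstar - y m⟫) := by
    intro m hm
    induction m, hm using Nat.le_induction with
    | base =>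
      intro _
      have he : Finset.Icc 2 1 = ∅ := Finset.Icc_eq_empty (by omega)
      simp only [Finset.Icc_self, Finset.sum_singleton, Nat.cast_one, he,
        Finset.sum_empty, mul_zero, sub_self, zero_mul]
      linarith
    | succ p hp ih =>
      intro hpT
      have ihp := ih (by omega)
      have hsp := hstep p hp hpT
      rw [Finset.sum_Icc_succ_top (by omega : 1 ≤ p + 1),
        Finset.sum_Icc_succ_top (by omega : 2 ≤ p + 1)]
      push_cast
      have hd : η * (∑ k ∈ Finset.Icc 2 p, ⟪Q k, xstar - y k⟫ + ⟪Q (p+1), xstar - y (p+1)⟫)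
          = η * ∑ k ∈ Finset.Icc 2 p, ⟪Q k, xstar - y k⟫
            + η * ⟪Q (p+1), xstar - y (p+1)⟫ := by ring
      rw [hd]
      linarith
  -- C2 induction (η-free form)
  have hC2 : ∀ m, 1 ≤ m → m ≤ T →
      ∑ k ∈ Finset.Icc 2 m, ⟪Q k, xstar - y k⟫ ≤
        ⟪Q m, xstar - x 1⟫ - ‖Q m‖^2/2
        + ∑ k ∈ Finset.Icc 2 m, (R * ‖y k - x k‖ - ‖y k - x k‖^2/2) := by
    intro m hm
    induction m, hm using Nat.le_induction with
    | base =>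
      intro _
      have he : Finset.Icc 2 1 = ∅ := Finset.Icc_eq_empty (by omega)
      simp [he, hQ1]
    | succ p hp ih =>
      intro hpT
      have ihp := ih (by omega)
      have hQp1 := hQrec p hp hpT
      -- exact identity at k = p+1
      have hid : ⟪Q (p+1), xstar - y (p+1)⟫ =
          ⟪Q p, xstar - x (p+1)⟫ + ⟪y (p+1) - x (p+1), xstar - x (p+1)⟫
          - (‖Q (p+1)‖^2 - ‖Q p‖^2)/2 - ‖y (p+1) - x (p+1)‖^2/2 := by
        have hw : xstar - y (p+1) = (xstar - x (p+1)) - (y (p+1) - x (p+1)) := by abel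
        rw [hw, hQp1]
        simp only [inner_sub_left, inner_sub_right, inner_add_left, inner_add_right,
          inner_neg_left, inner_neg_right, real_inner_smul_left, real_inner_smul_right,
          norm_add_sq_real, norm_sub_sq_real, real_inner_self_eq_norm_sq, real_inner_comm]
        ring
      -- optimality at step p
      have hopt : ⟪Q p, xstar - x (p+1)⟫ ≤ 0 := by
        have h := hxmin p hp (by omega) xstar hxstar
        simp only [inner_neg_left] at h
        rw [inner_sub_right]
        linarith
      -- Cauchy–Schwarz piece
      have hcs : ⟪y (p+1) - x (p+1), xstar - x (p+1)⟫
          - ⟪y (p+1) - x (p+1), xstar - x 1⟫ ≤ R * ‖y (p+1) - x (p+1)‖ := by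
        have heq : ⟪y (p+1) - x (p+1), xstar - x (p+1)⟫
            - ⟪y (p+1) - x (p+1), xstar - x 1⟫
            = ⟪y (p+1) - x (p+1), x 1 - x (p+1)⟫ := by
          rw [← inner_sub_right]
          congr 1
          abel
        rw [heq]
        have h1 := real_inner_le_norm (y (p+1) - x (p+1)) (x 1 - x (p+1))
        have h2 : ‖x 1 - x (p+1)‖ ≤ R := by
          rw [norm_sub_rev]; exact hball _ (hxmem p hp (by omega))
        calc ⟪y (p+1) - x (p+1), x 1 - x (p+1)⟫
            ≤ ‖y (p+1) - x (p+1)‖ * ‖x 1 - x (p+1)‖ := h1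
          _ ≤ ‖y (p+1) - x (p+1)‖ * R :=
              mul_le_mul_of_nonneg_left h2 (norm_nonneg _)
          _ = R * ‖y (p+1) - x (p+1)‖ := mul_comm _ _
      have hQin : ⟪Q (p+1), xstar - x 1⟫
          = ⟪Q p, xstar - x 1⟫ + ⟪y (p+1) - x (p+1), xstar - x 1⟫ := by
        rw [hQp1, inner_add_left]
      rw [Finset.sum_Icc_succ_top (by omega : 2 ≤ p + 1),
        Finset.sum_Icc_succ_top (by omega : 2 ≤ p + 1)]
      linarith
  -- endgame sum bound
  have hU : ∑ k ∈ Finset.Icc 1 T, (f (y k) - f xstar) + G * ‖Q T‖ ≤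
      α/2 * R^2 + (T:ℝ) * (G^2/(2*α)) + η * ((T:ℝ) - 1) * (R^2/2)
        + (G + η*R)^2/(2*η) := by
    have hC1T := hC1 T hT le_rfl
    have hC2T := hC2 T hT le_rfl
    -- f(y k) - f(xstar) ≤ -⟪g k, xstar - y k⟫
    have hfy : ∑ k ∈ Finset.Icc 1 T, (f (y k) - f xstar) ≤
        ∑ k ∈ Finset.Icc 1 T, (-⟪g k, xstar - y k⟫) := by
      apply Finset.sum_le_sum
      intro k hk
      rw [Finset.mem_Icc] at hk
      have := hg k hk.1 hk.2 xstar
      linarith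
    -- ‖w 1‖ ≤ R
    have hw1 : α/2 * ‖xstar - y 1‖^2 ≤ α/2 * R^2 := by
      have h1 : ‖xstar - y 1‖ ≤ R := by rw [hy1]; exact hball xstar hxstar
      have h2 : ‖xstar - y 1‖^2 ≤ R^2 := by nlinarith [norm_nonneg (xstar - y 1)]
      exact mul_le_mul_of_nonneg_left h2 (by positivity)
    -- last gradient term
    have hgT : -⟪g T, xstar - y T⟫ ≤ G * ‖xstar - y T‖ := by
      have ha := abs_real_inner_le_norm (g T) (xstar - y T)
      have hb : ‖g T‖ * ‖xstar - y T‖ ≤ G * ‖xstar - y T‖ :=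
        mul_le_mul_of_nonneg_right (hgle T hT le_rfl) (norm_nonneg _)
      calc -⟪g T, xstar - y T⟫ ≤ |⟪g T, xstar - y T⟫| := neg_le_abs _
        _ ≤ ‖g T‖ * ‖xstar - y T‖ := ha
        _ ≤ G * ‖xstar - y T‖ := hb
    have hygW := young α G (‖xstar - y T‖) hα0
    -- Q T boundary
    have hQTb : ⟪Q T, xstar - x 1⟫ ≤ R * ‖Q T‖ := by
      calc ⟪Q T, xstar - x 1⟫ ≤ ‖Q T‖ * ‖xstar - x 1‖ := real_inner_le_norm _ _
        _ ≤ ‖Q T‖ * R := mul_le_mul_of_nonneg_left (hball xstar hxstar) (norm_nonneg _)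
        _ = R * ‖Q T‖ := mul_comm _ _
    have hygQ := young η (G + η*R) (‖Q T‖) hη0
    -- per-step d bound summed
    have hdsum : ∑ k ∈ Finset.Icc 2 T, (R * ‖y k - x k‖ - ‖y k - x k‖^2/2)
        ≤ ((T:ℝ) - 1) * (R^2/2) := by
      have hcard : (Finset.Icc 2 T).card = T - 1 := by
        rw [Nat.card_Icc]; omega
      calc ∑ k ∈ Finset.Icc 2 T, (R * ‖y k - x k‖ - ‖y k - x k‖^2/2)
          ≤ ∑ k ∈ Finset.Icc 2 T, R^2/2 := by
            apply Finset.sum_le_sum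
            intro k _
            nlinarith [sq_nonneg (‖y k - x k‖ - R)]
        _ = ((T:ℝ) - 1) * (R^2/2) := by
            rw [Finset.sum_const, hcard, nsmul_eq_mul, Nat.cast_sub hT, Nat.cast_one]
    -- scale η-free inequalities by η
    have hC2η := mul_le_mul_of_nonneg_left hC2T hη0.le
    have hQTbη := mul_le_mul_of_nonneg_left hQTb hη0.le
    have hdη := mul_le_mul_of_nonneg_left hdsum hη0.le
    have hexp1 : η * (⟪Q T, xstar - x 1⟫ - ‖Q T‖^2/2
        + ∑ k ∈ Finset.Icc 2 T, (R * ‖y k - x k‖ - ‖y k - x k‖^2/2))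
        = η * ⟪Q T, xstar - x 1⟫ - η * (‖Q T‖^2/2)
        + η * ∑ k ∈ Finset.Icc 2 T, (R * ‖y k - x k‖ - ‖y k - x k‖^2/2) := by ring
    rw [hexp1] at hC2η
    have hexp2 : (G + η*R) * ‖Q T‖ = G * ‖Q T‖ + η * (R * ‖Q T‖) := by ring
    rw [hexp2] at hygQ
    linarith
  -- averaging
  have havg : (T:ℝ) * (f ((1 / (T : ℝ)) • ∑ k ∈ Finset.Icc 1 T, x k) - f xstar) ≤
      ∑ k ∈ Finset.Icc 1 T, (f (y k) - f xstar) + G * ‖Q T‖ := by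
    have hcard : (Finset.Icc 1 T).card = T := by rw [Nat.card_Icc]; omega
    -- Jensen
    have hjensen : f ((1 / (T:ℝ)) • ∑ k ∈ Finset.Icc 1 T, y k) ≤
        (1 / (T:ℝ)) * ∑ k ∈ Finset.Icc 1 T, f (y k) := by
      have h0 : ∀ k ∈ Finset.Icc 1 T, (0:ℝ) ≤ 1/(T:ℝ) := fun _ _ => by positivity
      have h1 : ∑ _k ∈ Finset.Icc 1 T, (1/(T:ℝ)) = 1 := by
        rw [Finset.sum_const, hcard, nsmul_eq_mul]
        field_simp
      have hmem : ∀ k ∈ Finset.Icc 1 T, y k ∈ Set.univ := fun _ _ => Set.mem_univ _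
      have hj := hconv.map_sum_le h0 h1 hmem
      calc f ((1 / (T:ℝ)) • ∑ k ∈ Finset.Icc 1 T, y k)
          = f (∑ k ∈ Finset.Icc 1 T, (1/(T:ℝ)) • y k) := by rw [Finset.smul_sum]
        _ ≤ ∑ k ∈ Finset.Icc 1 T, (1/(T:ℝ)) • f (y k) := hj
        _ = (1 / (T:ℝ)) * ∑ k ∈ Finset.Icc 1 T, f (y k) := by
            rw [Finset.mul_sum]
            simp [smul_eq_mul]
    -- Lipschitz between the two averages
    have hdiff : (1 / (T:ℝ)) • ∑ k ∈ Finset.Icc 1 T, x k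
        - (1 / (T:ℝ)) • ∑ k ∈ Finset.Icc 1 T, y k = -((1 / (T:ℝ)) • Q T) := by
      rw [hQm T le_rfl, ← smul_sub, ← smul_neg]
      congr 1
      rw [← Finset.sum_sub_distrib, ← Finset.sum_neg_distrib]
      apply Finset.sum_congr rfl
      intro k _
      abel
    have hnd : ‖(1 / (T:ℝ)) • ∑ k ∈ Finset.Icc 1 T, x k
        - (1 / (T:ℝ)) • ∑ k ∈ Finset.Icc 1 T, y k‖ = (1 / (T:ℝ)) * ‖Q T‖ := by
      rw [hdiff, norm_neg, norm_smul, Real.norm_eq_abs, abs_of_pos (by positivity)]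
    have hlipT : f ((1 / (T:ℝ)) • ∑ k ∈ Finset.Icc 1 T, x k) ≤
        f ((1 / (T:ℝ)) • ∑ k ∈ Finset.Icc 1 T, y k) + G * ((1 / (T:ℝ)) * ‖Q T‖) := by
      have h := (abs_le.mp (hlip ((1 / (T:ℝ)) • ∑ k ∈ Finset.Icc 1 T, x k)
        ((1 / (T:ℝ)) • ∑ k ∈ Finset.Icc 1 T, y k))).2
      rw [hnd] at h
      linarith
    have hsplit : ∑ k ∈ Finset.Icc 1 T, (f (y k) - f xstar)
        = ∑ k ∈ Finset.Icc 1 T, f (y k) - (T:ℝ) * f xstar := by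
      rw [Finset.sum_sub_distrib, Finset.sum_const, hcard, nsmul_eq_mul]
    have hTinv : (T:ℝ) * (1/(T:ℝ)) = 1 := by field_simp
    have hmain := mul_le_mul_of_nonneg_left (le_trans hlipT
      (by linarith : f ((1 / (T:ℝ)) • ∑ k ∈ Finset.Icc 1 T, y k)
        + G * ((1 / (T:ℝ)) * ‖Q T‖) ≤ (1 / (T:ℝ)) * ∑ k ∈ Finset.Icc 1 T, f (y k)
        + G * ((1 / (T:ℝ)) * ‖Q T‖))) hT0.le
    rw [hsplit]
    have he1 : (T:ℝ) * ((1 / (T:ℝ)) * ∑ k ∈ Finset.Icc 1 T, f (y k)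
        + G * ((1 / (T:ℝ)) * ‖Q T‖))
        = ((T:ℝ) * (1/(T:ℝ))) * ∑ k ∈ Finset.Icc 1 T, f (y k)
          + ((T:ℝ) * (1/(T:ℝ))) * (G * ‖Q T‖) := by ring
    rw [he1, hTinv, one_mul, one_mul] at hmain
    nlinarith [hmain]
  -- numeric conclusion
  have hnum : α/2 * R^2 + (T:ℝ) * (G^2/(2*α)) + η * ((T:ℝ) - 1) * (R^2/2)
      + (G + η*R)^2/(2*η) ≤ 3 * G * R * Real.sqrt T := by
    have hs2 : (2:ℝ) ≤ Real.sqrt T * Real.sqrt T := by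
      rw [Real.mul_self_sqrt hT0.le]; exact_mod_cast hT2'
    have hTss : (T:ℝ) = Real.sqrt T * Real.sqrt T := (Real.mul_self_sqrt hT0.le).symm
    set s := Real.sqrt T with hsdef
    rw [hα, hη, hTss]
    have hs0 : 0 < s := hsq0
    have hLHS : G*s/R/2*R^2 + (s*s)*(G^2/(2*(G*s/R)))
        + (2*G/(R*s))*((s*s) - 1)*(R^2/2)
        + (G + (2*G/(R*s))*R)^2/(2*(2*G/(R*s))) = G*R*((9/4)*s + 1) := by
      field_simp
      ring
    rw [hLHS]
    have h43 : (4:ℝ)/3 ≤ s := by nlinarith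
    nlinarith [mul_pos hG hR]
  have hfinal : (T:ℝ) * (f ((1 / (T : ℝ)) • ∑ k ∈ Finset.Icc 1 T, x k) - f xstar) ≤
      3 * G * R * Real.sqrt T := le_trans havg (le_trans hU hnum)
  have hTs : Real.sqrt T * Real.sqrt T = (T:ℝ) := Real.mul_self_sqrt hT0.le
  rw [le_div_iff₀ hsq0]
  have h9 : (f ((1 / (T : ℝ)) • ∑ k ∈ Finset.Icc 1 T, x k) - f xstar) * Real.sqrt T * Real.sqrt T
      ≤ (3 * R * G) * Real.sqrt T := by
    rw [mul_assoc, hTs]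
    linarith [hfinal]
  exact le_of_mul_le_mul_right h9 hsq0
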